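/- Let N ≥ 1, let λ : Fin N → ℝ with λ k > 0 for all k, and set a*_k := 2/(λ k). Define the total gradient potential F : (Fin N → ℝ) → ℝ by F a := ∑ k, λ k * (a*_k/(a k) − Real.log (a*_k/(a k)) − 1). Let T̃⁺ > 1 and 0 < T̃⁻ < 1, and define the trajectories a⁺ and a⁻ by a± k t := 2 * (1 + (T̃± − 1) * Real.exp (−2*(λ k)*t)) / (λ k). If F (fun k => a⁺ k 0) = F (fun k => a⁻ k 0) (F-equidistant initial conditions), then for all t ≥ 0: F (fun k => a⁻ k t) ≤ F (fun k => a⁺ k t). That is, a Gaussian chain warms up faster than it cools down, universally in the temperature ratio. -/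

import Mathlib

/-!
Write `a_k(t) = a*_k (1 + u_k(t))` with `u_k(t) = (T̃ - 1) e^{-2 λ_k t}`. Then the `k`-th term of
`F` is `λ_k g(u_k)` with `g u = (1 + u)⁻¹ + log (1 + u) - 1`, and all modes start at the same
deviation `T̃ - 1`, so `F`-equidistance means `g p = g q` for `p = T̃⁺ - 1 > 0 > q = T̃⁻ - 1`.
It remains to compare the modes one by one: `h s = g (p s) - g (q s)` vanishes at `s = 0, 1`
and has derivative `s m(s)` with `m s = p²/(1 + p s)² - q²/(1 + q s)²` decreasing, so `h` first
increases and then decreases on `[0, 1]`, hence is nonnegative there; take `s = e^{-2 λ_k t}`.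
-/

open Set Real

theorem min_le_of_hasDerivAt_mul_antitoneOn {f w m : ℝ → ℝ} {a b x : ℝ}
    (hf : ∀ y ∈ Icc a b, HasDerivAt f (w y * m y) y) (hw : ∀ y ∈ Icc a b, 0 ≤ w y)
    (hm : AntitoneOn m (Icc a b)) (hx : x ∈ Icc a b) :
    min (f a) (f b) ≤ f x := by
  have hderiv : ∀ {c d}, Icc c d ⊆ Icc a b →
      ∀ y ∈ interior (Icc c d), HasDerivWithinAt f (w y * m y) (interior (Icc c d)) y :=
    fun hsub y hy => (hf y (hsub (interior_subset hy))).hasDerivWithinAt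
  have hcont : ∀ {c d}, Icc c d ⊆ Icc a b → ContinuousOn f (Icc c d) :=
    fun hsub y hy => (hf y (hsub hy)).continuousAt.continuousWithinAt
  have hax : Icc a x ⊆ Icc a b := Icc_subset_Icc le_rfl hx.2
  have hxb : Icc x b ⊆ Icc a b := Icc_subset_Icc hx.1 le_rfl
  rcases le_or_gt 0 (m x) with hmx | hmx
  · have hmono := monotoneOn_of_hasDerivWithinAt_nonneg (convex_Icc a x) (hcont hax)
      (hderiv hax) fun y hy => by
        rw [interior_Icc] at hy
        have hy' : y ∈ Icc a b := hax (Ioo_subset_Icc_self hy)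
        exact mul_nonneg (hw y hy') (hmx.trans (hm hy' hx hy.2.le))
    exact min_le_of_left_le (hmono (left_mem_Icc.2 hx.1) (right_mem_Icc.2 hx.1) hx.1)
  · have hanti := antitoneOn_of_hasDerivWithinAt_nonpos (convex_Icc x b) (hcont hxb)
      (hderiv hxb) fun y hy => by
        rw [interior_Icc] at hy
        have hy' : y ∈ Icc a b := hxb (Ioo_subset_Icc_self hy)
        exact mul_nonpos_of_nonneg_of_nonpos (hw y hy') ((hm hx hy' hy.1.le).trans hmx.le)
    exact min_le_of_right_le (hanti (left_mem_Icc.2 hx.2) (right_mem_Icc.2 hx.2) hx.2)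

noncomputable def modePotential (u : ℝ) : ℝ := (1 + u)⁻¹ + log (1 + u) - 1

@[simp]
theorem modePotential_zero : modePotential 0 = 0 := by simp [modePotential]

theorem hasDerivAt_modePotential {u : ℝ} (hu : 1 + u ≠ 0) :
    HasDerivAt modePotential (u / (1 + u) ^ 2) u := by
  have hlin : HasDerivAt (fun x : ℝ => 1 + x) 1 u := (hasDerivAt_id u).const_add 1
  refine (((hlin.inv hu).add (hlin.log hu)).sub_const 1).congr_deriv ?_
  field_simp
  ring

theorem hasDerivAt_modePotential_mul {p x : ℝ} (hx : 1 + p * x ≠ 0) :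
    HasDerivAt (fun y => modePotential (p * y)) (x * (p ^ 2 / (1 + p * x) ^ 2)) x := by
  refine ((hasDerivAt_modePotential hx).comp x ((hasDerivAt_id x).const_mul p)).congr_deriv ?_
  field_simp

theorem modePotential_mul_le_of_eq {p q s : ℝ} (hp : 0 ≤ p) (hq₁ : -1 < q) (hq₀ : q ≤ 0)
    (hpq : modePotential p = modePotential q) (hs : s ∈ Icc (0 : ℝ) 1) :
    modePotential (q * s) ≤ modePotential (p * s) := by
  have hP : ∀ x ∈ Icc (0 : ℝ) 1, 0 < 1 + p * x := fun x hx => by nlinarith [hx.1]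
  have hQ : ∀ x ∈ Icc (0 : ℝ) 1, 0 < 1 + q * x := fun x hx => by nlinarith [hx.1, hx.2]
  have hderiv : ∀ x ∈ Icc (0 : ℝ) 1,
      HasDerivAt (fun y => modePotential (p * y) - modePotential (q * y))
        (x * (p ^ 2 / (1 + p * x) ^ 2 - q ^ 2 / (1 + q * x) ^ 2)) x := fun x hx =>
    ((hasDerivAt_modePotential_mul (hP x hx).ne').sub
      (hasDerivAt_modePotential_mul (hQ x hx).ne')).congr_deriv (by ring)
  have hanti : AntitoneOn (fun x => p ^ 2 / (1 + p * x) ^ 2 - q ^ 2 / (1 + q * x) ^ 2)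
      (Icc 0 1) := fun x hx y hy hxy => by
    have := hP x hx
    have := hQ y hy
    have : 1 + p * x ≤ 1 + p * y := by nlinarith
    have : 1 + q * y ≤ 1 + q * x := by nlinarith
    dsimp only
    gcongr
  have := min_le_of_hasDerivAt_mul_antitoneOn hderiv (fun x hx => hx.1) hanti hs
  simp only [mul_zero, mul_one, modePotential_zero, hpq, sub_self, min_self] at this
  linarith

theorem sum_mul_kl_eq_sum_mul_modePotential {ι : Type*} [Fintype ι] {lam : ι → ℝ}
    (hlam : ∀ k, lam k ≠ 0) (u : ι → ℝ) :
    ∑ k, lam k * ((2 / lam k) / (2 * (1 + u k) / lam k)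
        - log ((2 / lam k) / (2 * (1 + u k) / lam k)) - 1)
      = ∑ k, lam k * modePotential (u k) := by
  refine Finset.sum_congr rfl fun k _ => ?_
  have hratio : (2 / lam k) / (2 * (1 + u k) / lam k) = (1 + u k)⁻¹ := by
    field_simp [hlam k]
  rw [hratio, log_inv, modePotential]
  ring

/-- **Universal asymmetry of Gaussian chains: warming up is faster than cooling down.**
A Gaussian chain with `N` independent normal modes of eigenvalues `λ k > 0`, equilibrium
variances `a*_k = 2/(λ k)` and total gradient potential
`F a = ∑ k, λ k (a*_k/(a k) − log (a*_k/(a k)) − 1)` relaxes faster when warming up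
(`T̃⁻ < 1`) than when cooling down (`T̃⁺ > 1`) from `F`-equidistant initial conditions. -/
theorem gaussian_chain_warming_faster_than_cooling
    (N : ℕ) (hN : 1 ≤ N)
    (lam : Fin N → ℝ) (hlam : ∀ k, 0 < lam k)
    (F : (Fin N → ℝ) → ℝ)
    (hF : ∀ a : Fin N → ℝ,
      F a = ∑ k, lam k * ((2 / lam k) / a k - Real.log ((2 / lam k) / a k) - 1))
    (Tp Tm : ℝ) (hTp : 1 < Tp) (hTm0 : 0 < Tm) (hTm1 : Tm < 1)
    (ap am : Fin N → ℝ → ℝ)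
    (hap : ∀ k, ∀ t : ℝ, ap k t = 2 * (1 + (Tp - 1) * Real.exp (-2 * lam k * t)) / lam k)
    (ham : ∀ k, ∀ t : ℝ, am k t = 2 * (1 + (Tm - 1) * Real.exp (-2 * lam k * t)) / lam k)
    (heq : F (fun k => ap k 0) = F (fun k => am k 0)) :
    ∀ t : ℝ, 0 ≤ t → F (fun k => am k t) ≤ F (fun k => ap k t) := by
  have hF_traj : ∀ (a : Fin N → ℝ → ℝ) (T : ℝ),
      (∀ k t, a k t = 2 * (1 + (T - 1) * exp (-2 * lam k * t)) / lam k) → ∀ t,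
      F (fun k => a k t) = ∑ k, lam k * modePotential ((T - 1) * exp (-2 * lam k * t)) :=
    fun a T ha t => by
      rw [hF]
      simp only [ha]
      exact sum_mul_kl_eq_sum_mul_modePotential (fun k => (hlam k).ne') _
  have hsum_pos : 0 < ∑ k, lam k :=
    Finset.sum_pos (fun k _ => hlam k) ⟨⟨0, hN⟩, Finset.mem_univ _⟩
  have hpq : modePotential (Tp - 1) = modePotential (Tm - 1) := by
    rw [hF_traj ap Tp hap, hF_traj am Tm ham] at heq
    simp only [mul_zero, exp_zero, mul_one, ← Finset.sum_mul] at heq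
    exact mul_left_cancel₀ hsum_pos.ne' heq
  intro t ht
  rw [hF_traj ap Tp hap, hF_traj am Tm ham]
  refine Finset.sum_le_sum fun k _ => mul_le_mul_of_nonneg_left ?_ (hlam k).le
  have hs : exp (-2 * lam k * t) ∈ Icc (0 : ℝ) 1 :=
    ⟨(exp_pos _).le, exp_le_one_iff.2 (by nlinarith [hlam k])⟩
  exact modePotential_mul_le_of_eq (by linarith) (by linarith) (by linarith) hpq hs
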